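/- Let r be a rectangle with respect to a partition (X1, X2) of X_n such that every model of r is a threshold model of f_n, i.e., every model x of r satisfies Σ_{1≤i,j≤n} w_{i,j}·x_{i,j} = 2^(2n) − 1. Then there exists a rectangle r̂ with respect to the same partition (X1, X2) whose models are exactly the maximal matching assignments accepted by r. -/

import Mathlib

/-- `g` depends only on the variables in `S`. -/
def DependsOnlyOn {X : Type*} (S : Finset X) (g : (X → Bool) → Bool) : Prop :=
  ∀ x y : X → Bool, (∀ v ∈ S, x v = y v) → g x = g y

/-- `r` is a rectangle with respect to the partition `(X1, X2)` of the variable set. -/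
def IsRectangle {X : Type*} [Fintype X] [DecidableEq X] (X1 X2 : Finset X)
    (r : (X → Bool) → Bool) : Prop :=
  X1 ∪ X2 = Finset.univ ∧ X1 ∩ X2 = ∅ ∧
    ∃ ρ1 ρ2 : (X → Bool) → Bool, DependsOnlyOn X1 ρ1 ∧ DependsOnlyOn X2 ρ2 ∧
      ∀ x, r x = (ρ1 x && ρ2 x)

/-- `r` is a rectangle with respect to some balanced partition. -/
def IsBalancedRectangle {X : Type*} [Fintype X] [DecidableEq X]
    (r : (X → Bool) → Bool) : Prop :=
  ∃ X1 X2 : Finset X, IsRectangle X1 X2 r ∧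
    Fintype.card X ≤ 3 * X1.card ∧ 3 * X1.card ≤ 2 * Fintype.card X

/-- A balanced rectangle cover of `f`: a finite list of balanced rectangles whose
disjunction is equivalent to `f`. -/
def IsBalancedRectangleCover {X : Type*} [Fintype X] [DecidableEq X]
    (L : List ((X → Bool) → Bool)) (f : (X → Bool) → Bool) : Prop :=
  (∀ r ∈ L, IsBalancedRectangle r) ∧
    ∀ x, f x = true ↔ ∃ r ∈ L, r x = true

/-- The weight of an assignment to the `n × n` grid of variables, where variable `(i,j)`
(`0`-indexed) has weight `2 ^ i + 2 ^ (n + j)`. -/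
def pbWeight (n : ℕ) (x : Fin n × Fin n → Bool) : ℕ :=
  ∑ p : Fin n × Fin n, if x p = true then 2 ^ (p.1 : ℕ) + 2 ^ (n + (p.2 : ℕ)) else 0

/-- The pseudo-Boolean constraint `f_n`. -/
def fPB (n : ℕ) (x : Fin n × Fin n → Bool) : Bool :=
  decide (2 ^ (2 * n) - 1 ≤ pbWeight n x)

/-- A maximal matching assignment: the assignment is an `n × n` permutation matrix. -/
def IsMaximalMatching (n : ℕ) (x : Fin n × Fin n → Bool) : Prop :=
  (∀ i : Fin n, ∃! j : Fin n, x (i, j) = true) ∧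
  (∀ j : Fin n, ∃! i : Fin n, x (i, j) = true)

/-!
Gluing two models of a rectangle across its partition gives again a model. If `y` and `z` are
permutation-matrix models of `r`, the glued assignment `w` (equal to `y` on `X1` and to `z` on
`X2`) is a threshold model, as is `y`, so `y` and `z` have the same weight on `X2`. On `X2` every
row and column of a permutation matrix holds at most one `1`, so that weight is a binary expansion
that determines the row and column counts of `X2`; hence `w` has the row and column counts of `y`
and is a permutation matrix. The permutation-matrix models of `r` are thus closed under gluing,
and every set of assignments closed under gluing is the model set of a rectangle.
-/

open Finset

section Rectangle

variable {X : Type*} [Fintype X] [DecidableEq X] {X1 X2 : Finset X}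

theorem IsRectangle.piecewise_eq_true {r : (X → Bool) → Bool} (hr : IsRectangle X1 X2 r)
    {u v : X → Bool} (hu : r u = true) (hv : r v = true) : r (X1.piecewise u v) = true := by
  obtain ⟨-, hdisj, ρ1, ρ2, hρ1, hρ2, hr⟩ := hr
  rw [hr, Bool.and_eq_true] at hu hv ⊢
  refine ⟨(hρ1 _ _ fun p hp => piecewise_eq_of_mem _ _ _ hp).trans hu.1,
    (hρ2 _ _ fun p hp => piecewise_eq_of_notMem _ _ _ fun hp1 => ?_).trans hv.2⟩
  simpa [hdisj] using mem_inter.2 ⟨hp1, hp⟩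

theorem exists_isRectangle_of_piecewise_mem (hunion : X1 ∪ X2 = Finset.univ)
    (hinter : X1 ∩ X2 = ∅) (M : Set (X → Bool)) (hM : ∀ y ∈ M, ∀ z ∈ M, X1.piecewise y z ∈ M) :
    ∃ r : (X → Bool) → Bool, IsRectangle X1 X2 r ∧ ∀ x, r x = true ↔ x ∈ M := by
  classical
  let ρ (S : Finset X) (x : X → Bool) : Bool := decide (∃ y ∈ M, ∀ v ∈ S, y v = x v)
  have hρ (S : Finset X) : DependsOnlyOn S (ρ S) := fun x x' hxx' => by
    simp only [ρ, decide_eq_decide]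
    exact exists_congr fun y => and_congr_right fun _ =>
      forall₂_congr fun v hv => by rw [hxx' v hv]
  refine ⟨fun x => ρ X1 x && ρ X2 x, ⟨hunion, hinter, ρ X1, ρ X2, hρ X1, hρ X2, fun _ => rfl⟩,
    fun x => ⟨fun hx => ?_, fun hx => by
      simpa [ρ] using ⟨⟨x, hx, fun _ _ => rfl⟩, x, hx, fun _ _ => rfl⟩⟩⟩
  simp only [ρ, Bool.and_eq_true, decide_eq_true_eq] at hx
  obtain ⟨⟨y, hy, hyx⟩, z, hz, hzx⟩ := hx
  convert hM y hy z hz using 1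
  funext v
  by_cases hv : v ∈ X1
  · rw [piecewise_eq_of_mem _ _ _ hv, hyx v hv]
  · have hv12 : v ∈ X1 ∪ X2 := hunion ▸ mem_univ v
    have hv2 : v ∈ X2 := by simpa [hv] using hv12
    rw [piecewise_eq_of_notMem _ _ _ hv, hzx v hv2]

end Rectangle

theorem eq_of_sum_mul_two_pow_add_eq {m : ℕ} {b c : Fin m → ℕ} (hb : ∀ i, b i ≤ 1)
    (hc : ∀ i, c i ≤ 1) {d d' : ℕ}
    (h : ∑ i, b i * 2 ^ (i : ℕ) + 2 ^ m * d = ∑ i, c i * 2 ^ (i : ℕ) + 2 ^ m * d') :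
    b = c ∧ d = d' := by
  induction m generalizing d d' with
  | zero => simpa [Subsingleton.elim b c] using h
  | succ m ih =>
    have hsplit (e : Fin (m + 1) → ℕ) (d : ℕ) : ∑ i, e i * 2 ^ (i : ℕ) + 2 ^ (m + 1) * d =
        e 0 + 2 * (∑ i : Fin m, e i.succ * 2 ^ (i : ℕ) + 2 ^ m * d) := by
      rw [Fin.sum_univ_succ, mul_add, Finset.mul_sum]
      simp only [Fin.val_zero, pow_zero, mul_one, Fin.val_succ, pow_succ]
      ring_nf
    rw [hsplit, hsplit] at h
    have h0 := hb 0
    have h0' := hc 0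
    obtain ⟨hbc, hdd⟩ :=
      ih (fun i => hb i.succ) (fun i => hc i.succ) (d := d) (d' := d') (by omega)
    exact ⟨funext fun i => Fin.cases (by omega) (fun i => congrFun hbc i) i, hdd⟩

section Lines

variable {α β : Type*} [DecidableEq β]

def lineCount (S : Finset α) (x : α → Bool) (π : α → β) (b : β) : ℕ :=
  #{p ∈ S | x p = true ∧ π p = b}

variable {S T : Finset α} {x y : α → Bool}

theorem lineCount_congr (h : ∀ p ∈ S, x p = y p) (π : α → β) (b : β) :
    lineCount S x π b = lineCount S y π b := by
  unfold lineCount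
  congr 1
  exact filter_congr fun p hp => by rw [h p hp]

theorem lineCount_mono (hST : S ⊆ T) (x : α → Bool) (π : α → β) (b : β) :
    lineCount S x π b ≤ lineCount T x π b :=
  card_le_card (filter_subset_filter _ hST)

theorem lineCount_union [DecidableEq α] (h : Disjoint S T) (x : α → Bool) (π : α → β) (b : β) :
    lineCount (S ∪ T) x π b = lineCount S x π b + lineCount T x π b := by
  rw [lineCount, filter_union, card_union_of_disjoint (disjoint_filter_filter h)]
  rfl

theorem lineCount_univ_piecewise [Fintype α] [DecidableEq α] (S : Finset α) (y z : α → Bool)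
    (π : α → β) (b : β) :
    lineCount univ (S.piecewise y z) π b = lineCount S y π b + lineCount Sᶜ z π b := by
  rw [← union_compl S, lineCount_union disjoint_compl_right,
    lineCount_congr (fun p hp => piecewise_eq_of_mem _ _ _ hp),
    lineCount_congr (fun p hp => piecewise_eq_of_notMem _ _ _ (mem_compl.1 hp))]

theorem sum_ite_eq_sum_lineCount_mul [Fintype β] (S : Finset α) (x : α → Bool) (π : α → β)
    (f : β → ℕ) :
    ∑ p ∈ S, (if x p = true then f (π p) else 0) = ∑ b, lineCount S x π b * f b := by
  rw [← sum_filter, ← sum_fiberwise _ π]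
  refine sum_congr rfl fun b _ => ?_
  rw [filter_filter, sum_congr rfl fun p hp => by rw [(mem_filter.1 hp).2.2], sum_const,
    smul_eq_mul, lineCount]

end Lines

theorem existsUnique_prod_mk_left_iff {α β : Type*} (P : α × β → Prop) (a : α) :
    (∃! b, P (a, b)) ↔ ∃! p : α × β, P p ∧ p.1 = a := by
  constructor
  · rintro ⟨b, hb, hu⟩
    exact ⟨(a, b), ⟨hb, rfl⟩, fun ⟨a', b'⟩ ⟨h, ha⟩ => by subst ha; simp [hu b' h]⟩
  · rintro ⟨⟨a', b⟩, ⟨hb, rfl⟩, hu⟩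
    exact ⟨b, hb, fun b' h => congrArg Prod.snd (hu (a', b') ⟨h, rfl⟩)⟩

theorem existsUnique_prod_mk_right_iff {α β : Type*} (P : α × β → Prop) (b : β) :
    (∃! a, P (a, b)) ↔ ∃! p : α × β, P p ∧ p.2 = b := by
  constructor
  · rintro ⟨a, ha, hu⟩
    exact ⟨(a, b), ⟨ha, rfl⟩, fun ⟨a', b'⟩ ⟨h, hb⟩ => by subst hb; simp [hu a' h]⟩
  · rintro ⟨⟨a, b'⟩, ⟨ha, rfl⟩, hu⟩
    exact ⟨a, ha, fun a' h => congrArg Prod.fst (hu (a', b') ⟨h, rfl⟩)⟩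

section Grid

variable {n : ℕ}

def weightOn (n : ℕ) (S : Finset (Fin n × Fin n)) (x : Fin n × Fin n → Bool) : ℕ :=
  ∑ p ∈ S, if x p = true then 2 ^ (p.1 : ℕ) + 2 ^ (n + (p.2 : ℕ)) else 0

theorem pbWeight_eq_weightOn_add_weightOn_compl (S : Finset (Fin n × Fin n))
    (x : Fin n × Fin n → Bool) : pbWeight n x = weightOn n S x + weightOn n Sᶜ x :=
  (sum_add_sum_compl S _).symm

theorem weightOn_congr {S : Finset (Fin n × Fin n)} {x y : Fin n × Fin n → Bool}
    (h : ∀ p ∈ S, x p = y p) : weightOn n S x = weightOn n S y :=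
  sum_congr rfl fun p hp => by rw [h p hp]

theorem weightOn_eq_sum_lineCount (S : Finset (Fin n × Fin n)) (x : Fin n × Fin n → Bool) :
    weightOn n S x = ∑ i, lineCount S x Prod.fst i * 2 ^ (i : ℕ) +
      2 ^ n * ∑ j, lineCount S x Prod.snd j * 2 ^ (j : ℕ) := by
  simp only [weightOn, ite_add_zero, sum_add_distrib, pow_add, mul_sum]
  rw [sum_ite_eq_sum_lineCount_mul S x Prod.fst fun i => 2 ^ (i : ℕ),
    sum_ite_eq_sum_lineCount_mul S x Prod.snd fun j => 2 ^ n * 2 ^ (j : ℕ)]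
  exact congrArg _ (sum_congr rfl fun j _ => mul_left_comm _ _ _)

theorem isMaximalMatching_iff_lineCount (x : Fin n × Fin n → Bool) :
    IsMaximalMatching n x ↔
      (∀ i, lineCount univ x Prod.fst i = 1) ∧ ∀ j, lineCount univ x Prod.snd j = 1 := by
  simp only [IsMaximalMatching, existsUnique_prod_mk_left_iff (fun p => x p = true),
    existsUnique_prod_mk_right_iff (fun p => x p = true), Fintype.existsUnique_iff_card_one,
    lineCount]

theorem IsMaximalMatching.lineCount_le_one {x : Fin n × Fin n → Bool}
    (hx : IsMaximalMatching n x) (S : Finset (Fin n × Fin n)) :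
    (∀ i, lineCount S x Prod.fst i ≤ 1) ∧ ∀ j, lineCount S x Prod.snd j ≤ 1 := by
  rw [isMaximalMatching_iff_lineCount] at hx
  exact ⟨fun i => hx.1 i ▸ lineCount_mono (subset_univ S) x _ i,
    fun j => hx.2 j ▸ lineCount_mono (subset_univ S) x _ j⟩

theorem lineCount_eq_of_weightOn_eq {y z : Fin n × Fin n → Bool} (hy : IsMaximalMatching n y)
    (hz : IsMaximalMatching n z) {S : Finset (Fin n × Fin n)}
    (h : weightOn n S y = weightOn n S z) :
    lineCount S y Prod.fst = lineCount S z Prod.fst ∧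
      lineCount S y Prod.snd = lineCount S z Prod.snd := by
  rw [weightOn_eq_sum_lineCount, weightOn_eq_sum_lineCount] at h
  obtain ⟨hy1, hy2⟩ := hy.lineCount_le_one S
  obtain ⟨hz1, hz2⟩ := hz.lineCount_le_one S
  obtain ⟨hrow, hcol⟩ := eq_of_sum_mul_two_pow_add_eq hy1 hz1 h
  exact ⟨hrow, (eq_of_sum_mul_two_pow_add_eq hy2 hz2 (d := 0) (d' := 0) (by simpa using hcol)).1⟩

theorem isMaximalMatching_piecewise {y z : Fin n × Fin n → Bool} (hy : IsMaximalMatching n y)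
    (hz : IsMaximalMatching n z) (S : Finset (Fin n × Fin n))
    (h : pbWeight n (S.piecewise y z) = pbWeight n y) :
    IsMaximalMatching n (S.piecewise y z) := by
  have hweight : weightOn n Sᶜ z = weightOn n Sᶜ y := by
    rw [pbWeight_eq_weightOn_add_weightOn_compl S, pbWeight_eq_weightOn_add_weightOn_compl S y,
      weightOn_congr fun p hp => piecewise_eq_of_mem _ _ _ hp,
      weightOn_congr fun p hp => piecewise_eq_of_notMem _ _ _ (mem_compl.1 hp)] at h
    omega
  obtain ⟨hrow, hcol⟩ := lineCount_eq_of_weightOn_eq hz hy hweight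
  have hy' := (isMaximalMatching_iff_lineCount y).1 hy
  rw [← piecewise_same S y] at hy'
  simpa only [isMaximalMatching_iff_lineCount, lineCount_univ_piecewise, hrow, hcol] using hy'

end Grid

theorem stmt9_general (n : ℕ) (X1 X2 : Finset (Fin n × Fin n))
    (r : (Fin n × Fin n → Bool) → Bool)
    (hr : IsRectangle X1 X2 r)
    (hmodels : ∀ x, r x = true → pbWeight n x = 2 ^ (2 * n) - 1) :
    ∃ rhat : (Fin n × Fin n → Bool) → Bool, IsRectangle X1 X2 rhat ∧
      ∀ x, rhat x = true ↔ (r x = true ∧ IsMaximalMatching n x) := by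
  refine exists_isRectangle_of_piecewise_mem hr.1 hr.2.1 {x | r x = true ∧ IsMaximalMatching n x}
    ?_
  rintro y ⟨hry, hy⟩ z ⟨hrz, hz⟩
  have hrw := hr.piecewise_eq_true hry hrz
  exact ⟨hrw, isMaximalMatching_piecewise hy hz X1 ((hmodels _ hrw).trans (hmodels y hry).symm)⟩

theorem stmt9 (n : ℕ) (hn : 1 ≤ n) (X1 X2 : Finset (Fin n × Fin n))
    (r : (Fin n × Fin n → Bool) → Bool)
    (hr : IsRectangle X1 X2 r)
    (hmodels : ∀ x, r x = true → pbWeight n x = 2 ^ (2 * n) - 1) :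
    ∃ rhat : (Fin n × Fin n → Bool) → Bool, IsRectangle X1 X2 rhat ∧
      ∀ x, rhat x = true ↔ (r x = true ∧ IsMaximalMatching n x) :=
  stmt9_general n X1 X2 r hr hmodels
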